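/- Let c_n be a sequence in a field K of characteristic zero with c_0 = 1 such that for every Lie algebra pair morphism φ : g → h and all a₁, a₂ ∈ g, b ∈ h, n ≥ 0: c_n·([φ(a₁),φ(a₂)]@b^n) + ∑_{0≤k,l≤n, k+l≤n} c_k c_{n+1-k} ([φ(a₁)@b^l, φ(a₂)@b^k] - [φ(a₂)@b^l, φ(a₁)@b^k])@b^{n-k-l} = 0 holds as a universal identity (i.e. holds formally in the operad of Lie pairs). Then c_n is uniquely determined; moreover the first values are c_1 = -1/2 and c_2 = 1/12, obtained from 2c_1 = -c_0 and 3c_2 = -c_1 - c_1². -/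

import Mathlib

/-!
Test the universal identity on the two-dimensional non-abelian Lie algebra, spanned by `x` and
`b` with `⁅x, b⁆ = x` (realised by the matrix units `E₀₁` and `E₁₁`), taking `a₁ = x` and
`a₂ = b`. There `x @ bˡ = x` for all `l`, while `b @ bᵏ` vanishes for `k > 0`, so every term
collapses to a multiple of `x` and the identity becomes the scalar recursion
`cₙ + (n + 2) c₀ cₙ₊₁ + ∑_{k<n} cₖ₊₁ cₙ₋ₖ = 0`.
In characteristic zero `n + 2 ≠ 0`, so the recursion determines `cₙ₊₁` from `c₀, …, cₙ`.
-/

/-- `iterBracket x b n = x @ b^n`, the `n`-fold iterated bracket `[[…[x,b],…],b]`. -/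
def iterBracket {h : Type*} [LieRing h] (x b : h) : ℕ → h
  | 0 => x
  | n + 1 => ⁅iterBracket x b n, b⁆

/-- The universal Jacobi–Bernoulli identity for a sequence `c : ℕ → K`: for every
morphism of Lie algebras `φ : g → h`, all `a₁ a₂ ∈ g`, `b ∈ h` and `n ≥ 0`,
`cₙ·([φa₁,φa₂]@bⁿ) + ∑_{k+l≤n} cₖc_{n+1-k}([φa₁@bˡ,φa₂@bᵏ]-[φa₂@bˡ,φa₁@bᵏ])@b^{n-k-l} = 0`. -/
def JacobiBernoulliProp (K : Type) [Field K] [CharZero K] (c : ℕ → K) : Prop :=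
  ∀ (g h : Type) [LieRing g] [LieAlgebra K g] [LieRing h] [LieAlgebra K h]
    (φ : g →ₗ⁅K⁆ h) (a₁ a₂ : g) (b : h) (n : ℕ),
    c n • iterBracket ⁅φ a₁, φ a₂⁆ b n +
      ∑ k ∈ Finset.range (n + 1), ∑ l ∈ Finset.range (n + 1 - k),
        (c k * c (n + 1 - k)) •
          iterBracket
            (⁅iterBracket (φ a₁) b l, iterBracket (φ a₂) b k⁆ -
              ⁅iterBracket (φ a₂) b l, iterBracket (φ a₁) b k⁆) b (n - k - l) = 0

open Finset

section IterBracket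

variable {L : Type*} [LieRing L]

lemma iterBracket_smul {R : Type*} [CommRing R] [LieAlgebra R L] (t : R) (x b : L) (n : ℕ) :
    iterBracket (t • x) b n = t • iterBracket x b n := by
  induction n with
  | zero => rfl
  | succ n ih => exact (congrArg (⁅·, b⁆) ih).trans (smul_lie t _ b)

lemma iterBracket_of_lie_eq_self {x b : L} (h : ⁅x, b⁆ = x) (n : ℕ) :
    iterBracket x b n = x := by
  induction n with
  | zero => rfl
  | succ n ih => exact (congrArg (⁅·, b⁆) ih).trans h

lemma iterBracket_self (b : L) (n : ℕ) : iterBracket b b n = if n = 0 then b else 0 := by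
  induction n with
  | zero => rfl
  | succ n ih =>
    change ⁅iterBracket b b n, b⁆ = _
    split_ifs at ih <;> simp [ih]

lemma lie_iterBracket_self_sub_of_lie_eq_self {R : Type*} [CommRing R] [LieAlgebra R L]
    {x b : L} (h : ⁅x, b⁆ = x) (k l : ℕ) :
    ⁅x, iterBracket b b k⁆ - ⁅iterBracket b b l, x⁆ =
      ((if k = 0 then 1 else 0) + (if l = 0 then 1 else 0) : R) • x := by
  have hbx : ⁅b, x⁆ = -x := by rw [← lie_skew, h]
  rw [iterBracket_self, iterBracket_self]
  split_ifs <;> simp [h, hbx, add_smul]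

end IterBracket

section Recursion

variable {R : Type*} [CommRing R]

def JacobiBernoulliRecursion (c : ℕ → R) : Prop :=
  ∀ n : ℕ, c n + (n + 2) * c 0 * c (n + 1) + ∑ k ∈ range n, c (k + 1) * c (n - k) = 0

lemma sum_range_sum_range_mul_indicator (c : ℕ → R) (n : ℕ) :
    ∑ k ∈ range (n + 1), ∑ l ∈ range (n + 1 - k),
        c k * c (n + 1 - k) * ((if k = 0 then 1 else 0) + (if l = 0 then 1 else 0)) =
      (n + 2) * c 0 * c (n + 1) + ∑ k ∈ range n, c (k + 1) * c (n - k) := by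
  rw [sum_range_succ', add_comm]
  congr 1
  · simp only [if_true, Nat.sub_zero, mul_add, mul_one, mul_ite, mul_zero, sum_add_distrib,
      sum_const, card_range, nsmul_eq_mul, sum_ite_eq', mem_range, Nat.zero_lt_succ]
    push_cast
    ring
  · refine sum_congr rfl fun k hk => ?_
    have hpos : 0 < n - k := Nat.sub_pos_of_lt (mem_range.mp hk)
    simp only [Nat.add_sub_add_right, Nat.add_one_ne_zero, if_false, zero_add, mul_ite, mul_one,
      mul_zero, sum_ite_eq', mem_range, hpos, if_true]

lemma eq_of_jacobiBernoulliRecursion [IsDomain R] [CharZero R] {c d : ℕ → R}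
    (hc : JacobiBernoulliRecursion c) (hd : JacobiBernoulliRecursion d)
    (h0 : c 0 = d 0) (hc0 : c 0 ≠ 0) : c = d := by
  funext n
  induction n using Nat.strong_induction_on with
  | _ n ih =>
    match n with
    | 0 => exact h0
    | m + 1 =>
      have hsum : ∑ k ∈ range m, c (k + 1) * c (m - k) = ∑ k ∈ range m, d (k + 1) * d (m - k) :=
        sum_congr rfl fun k hk => by
          have := mem_range.mp hk
          rw [ih (k + 1) (by omega), ih (m - k) (by omega)]
      have hcoeff : ((m : R) + 2) * c 0 ≠ 0 :=
        mul_ne_zero (by exact_mod_cast Nat.add_one_ne_zero (m + 1)) hc0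
      refine mul_left_cancel₀ hcoeff ?_
      have := hc m
      rw [ih m (by omega), hsum] at this
      linear_combination this - hd m - ((m : R) + 2) * d (m + 1) * h0

end Recursion

lemma JacobiBernoulliProp.recursion_smul {K : Type} [Field K] [CharZero K] {c : ℕ → K}
    (hc : JacobiBernoulliProp K c) {L : Type} [LieRing L] [LieAlgebra K L] {x b : L}
    (h : ⁅x, b⁆ = x) (n : ℕ) :
    (c n + (n + 2) * c 0 * c (n + 1) + ∑ k ∈ range n, c (k + 1) * c (n - k)) • x = 0 := by
  have key := hc L L (LieHom.id) x b b n
  simp only [LieHom.coe_id, id_eq, h, iterBracket_of_lie_eq_self h,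
    lie_iterBracket_self_sub_of_lie_eq_self (R := K) h, iterBracket_smul, smul_smul] at key
  rw [add_assoc, add_smul, ← sum_range_sum_range_mul_indicator]
  simpa only [sum_smul] using key

lemma JacobiBernoulliProp.recursion {K : Type} [Field K] [CharZero K] {c : ℕ → K}
    (hc : JacobiBernoulliProp K c) : JacobiBernoulliRecursion c := by
  let _ : LieRing (Matrix (Fin 2) (Fin 2) K) := LieRing.ofAssociativeRing
  let x : Matrix (Fin 2) (Fin 2) K := !![0, 1; 0, 0]
  let b : Matrix (Fin 2) (Fin 2) K := !![0, 0; 0, 1]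
  have hxb : ⁅x, b⁆ = x := by
    ext i j
    fin_cases i <;> fin_cases j <;> simp [x, b, Ring.lie_def]
  refine fun n => (smul_eq_zero.mp (hc.recursion_smul hxb n)).resolve_right fun hx => ?_
  simpa [x] using congrFun (congrFun hx 0) 1

/-- A sequence with `c 0 = 1` satisfying the universal Jacobi–Bernoulli
identity is unique; its first values are `c 1 = -1/2` and `c 2 = 1/12`. -/
theorem jacobiBernoulli_sequence_unique (K : Type) [Field K] [CharZero K]
    (c d : ℕ → K) (hc : JacobiBernoulliProp K c) (hd : JacobiBernoulliProp K d)
    (hc0 : c 0 = 1) (hd0 : d 0 = 1) :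
    c = d ∧ c 1 = -(1 / 2) ∧ c 2 = 1 / 12 := by
  have hrec := hc.recursion
  have hc1 : c 1 = -(1 / 2) := by
    have h := hrec 0
    simp only [range_zero, sum_empty, Nat.cast_zero, hc0] at h
    linear_combination h / 2
  have hc2 : c 2 = 1 / 12 := by
    have h := hrec 1
    simp only [sum_range_one, Nat.cast_one, hc0, hc1] at h
    linear_combination h / 3
  exact ⟨eq_of_jacobiBernoulliRecursion hrec hd.recursion (hc0.trans hd0.symm) (by simp [hc0]),
    hc1, hc2⟩
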